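/- Let D be an SPBIBD with parameters (v,b,r,k,λ₁,0) of type (k−1,t), 0 < t < k, r < b, and let Γ be its incidence graph. Then every point p ∈ P is distance-regularized with intersection numbers c₀=0, c₁=1, c₂=λ₁, c₃=t, c₄=r and b₀=r, b₁=k−1, b₂=r−λ₁, b₃=k−t, b₄=0. That is, for every p ∈ P, every i with 0 ≤ i ≤ 4, and every vertex z at distance i from p, the number of neighbours of z at distance i−1 from p equals cᵢ and the number of neighbours of z at distance i+1 from p equals bᵢ. -/
import Mathlib


open Finset

/-- The set of blocks incident with a point `p`. -/
def blocksThru {P Bl : Type} [Fintype Bl] [DecidableEq P] (pts : Bl → Finset P)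
    (p : P) : Finset Bl :=
  Finset.univ.filter (fun C => p ∈ pts C)

/-- The number of blocks containing both points `p` and `q`. -/
def lamCount {P Bl : Type} [Fintype Bl] [DecidableEq P] [DecidableEq Bl]
    (pts : Bl → Finset P) (p q : P) : ℕ :=
  ((blocksThru pts p) ∩ (blocksThru pts q)).card

/-- The incidence graph of an incidence structure: points and blocks as the two
color classes, with a point adjacent to a block iff it lies in the block. -/
def incGraph {P Bl : Type} (pts : Bl → Finset P) : SimpleGraph (P ⊕ Bl) :=
  SimpleGraph.fromRel (fun u w =>
    ∃ (p : P) (C : Bl), u = Sum.inl p ∧ w = Sum.inr C ∧ p ∈ pts C)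

/-- The set of neighbours of `z` lying at distance `j` from `x`. -/
def nbrAt {V : Type} (G : SimpleGraph V) (x z : V) (j : ℕ) : Set V :=
  {w | G.Adj z w ∧ G.dist x w = j}

set_option linter.unusedSectionVars false
set_option linter.unusedVariables false

section aux
variable {P Bl : Type} [Fintype P] [Fintype Bl] [DecidableEq P] [DecidableEq Bl]
variable {pts : Bl → Finset P}

lemma adj_inl_inr {q : P} {C : Bl} :
    (incGraph pts).Adj (Sum.inl q) (Sum.inr C) ↔ q ∈ pts C := by
  simp [incGraph, SimpleGraph.fromRel_adj]

lemma adj_inr_inl {q : P} {C : Bl} :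
    (incGraph pts).Adj (Sum.inr C) (Sum.inl q) ↔ q ∈ pts C := by
  simp [incGraph, SimpleGraph.fromRel_adj]

lemma not_adj_inl_inl {q q' : P} : ¬ (incGraph pts).Adj (Sum.inl q) (Sum.inl q') := by
  simp [incGraph, SimpleGraph.fromRel_adj]

lemma not_adj_inr_inr {C C' : Bl} : ¬ (incGraph pts).Adj (Sum.inr C) (Sum.inr C') := by
  simp [incGraph, SimpleGraph.fromRel_adj]

lemma adj_inl_elim {q : P} {w : P ⊕ Bl} (h : (incGraph pts).Adj (Sum.inl q) w) :
    ∃ C, w = Sum.inr C ∧ q ∈ pts C := by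
  rcases w with q' | C
  · exact absurd h not_adj_inl_inl
  · exact ⟨C, rfl, adj_inl_inr.1 h⟩

lemma adj_inr_elim {C : Bl} {w : P ⊕ Bl} (h : (incGraph pts).Adj (Sum.inr C) w) :
    ∃ q, w = Sum.inl q ∧ q ∈ pts C := by
  rcases w with q | C'
  · exact ⟨q, rfl, adj_inr_inl.1 h⟩
  · exact absurd h not_adj_inr_inr

lemma adj_flip {u w : P ⊕ Bl} (h : (incGraph pts).Adj u w) : u.isLeft = !w.isLeft := by
  rcases u with q | C <;> rcases w with q' | C' <;> simp at *
  · exact not_adj_inl_inl h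
  · exact not_adj_inr_inr h

lemma walk_parity {u v : P ⊕ Bl} (w : (incGraph pts).Walk u v) :
    Even w.length ↔ (u.isLeft = v.isLeft) := by
  induction w with
  | nil => simp
  | cons h w ih =>
    rw [SimpleGraph.Walk.length_cons, Nat.even_add_one, ih, adj_flip h]
    cases v.isLeft <;> cases _root_.Sum.isLeft _ <;> simp_all

lemma mem_blocksThru {q : P} {C : Bl} : C ∈ blocksThru pts q ↔ q ∈ pts C := by
  simp [blocksThru]

lemma lam_pos_of_common {a c : P} {C : Bl} (ha : a ∈ pts C) (hc : c ∈ pts C) :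
    1 ≤ lamCount pts a c := by
  rw [lamCount]
  exact Finset.card_pos.2 ⟨C, Finset.mem_inter.2 ⟨mem_blocksThru.2 ha, mem_blocksThru.2 hc⟩⟩

lemma dist_inr_mem {p : P} {C : Bl} (h : p ∈ pts C) :
    (incGraph pts).dist (Sum.inl p) (Sum.inr C) = 1 := by
  have hadj : (incGraph pts).Adj (Sum.inl p) (Sum.inr C) := adj_inl_inr.2 h
  have hle : (incGraph pts).dist (Sum.inl p) (Sum.inr C) ≤ 1 := by
    simpa using SimpleGraph.dist_le hadj.toWalk
  have hne : (incGraph pts).dist (Sum.inl p) (Sum.inr C) ≠ 0 := by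
    intro h0
    rcases SimpleGraph.dist_eq_zero_iff_eq_or_not_reachable.1 h0 with h' | h'
    · simp at h'
    · exact h' hadj.reachable
  omega

lemma dist_inl_two {p q : P} (hne : q ≠ p) (h : 1 ≤ lamCount pts p q) :
    (incGraph pts).dist (Sum.inl p) (Sum.inl q) = 2 := by
  rw [lamCount] at h
  obtain ⟨B, hB⟩ := Finset.card_pos.1 h
  rw [Finset.mem_inter, mem_blocksThru, mem_blocksThru] at hB
  let W : (incGraph pts).Walk (Sum.inl p) (Sum.inl q) :=
    .cons (adj_inl_inr.2 hB.1) (.cons (adj_inr_inl.2 hB.2) .nil)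
  have hle : (incGraph pts).dist (Sum.inl p) (Sum.inl q) ≤ 2 := by
    simpa [W] using SimpleGraph.dist_le W
  have hreach : (incGraph pts).Reachable (Sum.inl p) (Sum.inl q) := ⟨W⟩
  have hne0 : (incGraph pts).dist (Sum.inl p) (Sum.inl q) ≠ 0 := by
    intro h0
    rcases SimpleGraph.dist_eq_zero_iff_eq_or_not_reachable.1 h0 with h' | h'
    · exact hne (by simpa using h'.symm)
    · exact h' hreach
  obtain ⟨Wd, hWd⟩ := hreach.exists_walk_length_eq_dist
  have hev : Even ((incGraph pts).dist (Sum.inl p) (Sum.inl q)) := by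
    rw [← hWd]; exact (walk_parity Wd).2 rfl
  rw [Nat.even_iff] at hev
  omega

lemma dist_inr_not {p : P} {C : Bl} (hC : p ∉ pts C)
    (hq : ∃ q ∈ pts C, 1 ≤ lamCount pts p q) :
    (incGraph pts).dist (Sum.inl p) (Sum.inr C) = 3 := by
  obtain ⟨q, hqC, hlc⟩ := hq
  rw [lamCount] at hlc
  obtain ⟨B, hB⟩ := Finset.card_pos.1 hlc
  rw [Finset.mem_inter, mem_blocksThru, mem_blocksThru] at hB
  let W : (incGraph pts).Walk (Sum.inl p) (Sum.inr C) :=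
    .cons (adj_inl_inr.2 hB.1) (.cons (adj_inr_inl.2 hB.2) (.cons (adj_inl_inr.2 hqC) .nil))
  have hle : (incGraph pts).dist (Sum.inl p) (Sum.inr C) ≤ 3 := by
    simpa [W] using SimpleGraph.dist_le W
  have hreach : (incGraph pts).Reachable (Sum.inl p) (Sum.inr C) := ⟨W⟩
  obtain ⟨Wd, hWd⟩ := hreach.exists_walk_length_eq_dist
  have hodd : ¬ Even ((incGraph pts).dist (Sum.inl p) (Sum.inr C)) := by
    rw [← hWd, walk_parity Wd]; simp
  have hne1 : (incGraph pts).dist (Sum.inl p) (Sum.inr C) ≠ 1 := by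
    intro h1
    have : (incGraph pts).Adj (Sum.inl p) (Sum.inr C) :=
      Wd.adj_of_length_eq_one (hWd.trans h1)
    exact hC (adj_inl_inr.1 this)
  rw [Nat.not_even_iff] at hodd
  omega

lemma dist_inl_four {p q : P} (hne : q ≠ p) (hlc : lamCount pts p q = 0)
    {C : Bl} (hqC : q ∈ pts C) (hd3 : (incGraph pts).dist (Sum.inl p) (Sum.inr C) = 3) :
    (incGraph pts).dist (Sum.inl p) (Sum.inl q) = 4 := by
  have hreachC : (incGraph pts).Reachable (Sum.inl p) (Sum.inr C) := by
    by_contra h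
    rw [(SimpleGraph.dist_eq_zero_iff_eq_or_not_reachable).2 (Or.inr h)] at hd3
    exact absurd hd3 (by norm_num)
  obtain ⟨W3, hW3⟩ := hreachC.exists_walk_length_eq_dist
  have hle : (incGraph pts).dist (Sum.inl p) (Sum.inl q) ≤ 4 := by
    have := SimpleGraph.dist_le (W3.concat (adj_inr_inl.2 hqC))
    rwa [SimpleGraph.Walk.length_concat, hW3, hd3] at this
  have hreach : (incGraph pts).Reachable (Sum.inl p) (Sum.inl q) := ⟨W3.concat (adj_inr_inl.2 hqC)⟩
  have hne0 : (incGraph pts).dist (Sum.inl p) (Sum.inl q) ≠ 0 := by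
    intro h0
    rcases SimpleGraph.dist_eq_zero_iff_eq_or_not_reachable.1 h0 with h' | h'
    · exact hne (by simpa using h'.symm)
    · exact h' hreach
  have hne2 : (incGraph pts).dist (Sum.inl p) (Sum.inl q) ≠ 2 := by
    intro h2
    obtain ⟨W2, hW2⟩ := hreach.exists_walk_length_eq_dist
    rw [h2] at hW2
    cases W2 with
    | nil => simp at hW2
    | cons h W' =>
      obtain ⟨B, rfl, hpB⟩ := adj_inl_elim h
      have hlen : W'.length = 1 := by simpa using hW2
      have hadj := W'.adj_of_length_eq_one hlen
      have hqB : q ∈ pts B := adj_inr_inl.1 hadj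
      have := lam_pos_of_common (pts := pts) hpB hqB
      omega
  obtain ⟨Wd, hWd⟩ := hreach.exists_walk_length_eq_dist
  have hev : Even ((incGraph pts).dist (Sum.inl p) (Sum.inl q)) := by
    rw [← hWd]; exact (walk_parity Wd).2 rfl
  rw [Nat.even_iff] at hev
  omega

end aux

/-- every point of the incidence graph is distance-regularized with
c₀=0, c₁=1, c₂=λ₁, c₃=t, c₄=r and b₀=r, b₁=k−1, b₂=r−λ₁, b₃=k−t, b₄=0. -/
theorem stmt4
    {P Bl : Type} [Fintype P] [Fintype Bl] [DecidableEq P] [DecidableEq Bl]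
    (pts : Bl → Finset P) (v b r k t lam y : ℕ)
    (hv : Fintype.card P = v) (hb : Fintype.card Bl = b)
    (hk : ∀ C : Bl, (pts C).card = k)
    (hr : ∀ p : P, (blocksThru pts p).card = r)
    (hlam : ∀ p q : P, p ≠ q → lamCount pts p q = lam ∨ lamCount pts p q = 0)
    (hflag : ∀ (p : P) (C : Bl), p ∈ pts C →
      ((pts C).filter (fun q => q ≠ p ∧ lamCount pts p q = lam)).card = k - 1)
    (hnonflag : ∀ (p : P) (C : Bl), p ∉ pts C →
      ((pts C).filter (fun q => lamCount pts p q = lam)).card = t)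
    (hkv : k < v) (hrb : r < b) (ht : 1 ≤ t) (htk : t < k) (hlam1 : 1 ≤ lam)
    : ∀ (p : P) (z : P ⊕ Bl),
      ((incGraph pts).dist (Sum.inl p) z = 0 →
        (nbrAt (incGraph pts) (Sum.inl p) z 1).ncard = r) ∧
      ((incGraph pts).dist (Sum.inl p) z = 1 →
        (nbrAt (incGraph pts) (Sum.inl p) z 0).ncard = 1 ∧
        (nbrAt (incGraph pts) (Sum.inl p) z 2).ncard = k - 1) ∧
      ((incGraph pts).dist (Sum.inl p) z = 2 →
        (nbrAt (incGraph pts) (Sum.inl p) z 1).ncard = lam ∧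
        (nbrAt (incGraph pts) (Sum.inl p) z 3).ncard = r - lam) ∧
      ((incGraph pts).dist (Sum.inl p) z = 3 →
        (nbrAt (incGraph pts) (Sum.inl p) z 2).ncard = t ∧
        (nbrAt (incGraph pts) (Sum.inl p) z 4).ncard = k - t) ∧
      ((incGraph pts).dist (Sum.inl p) z = 4 →
        (nbrAt (incGraph pts) (Sum.inl p) z 3).ncard = r ∧
        (nbrAt (incGraph pts) (Sum.inl p) z 5).ncard = 0) := by
  intro p
  -- r ≥ 1
  have hBl : Nonempty Bl := by
    rw [← Fintype.card_pos_iff]; omega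
  have hr1 : 1 ≤ r := by
    obtain ⟨C0⟩ := hBl
    have hk0 : 0 < (pts C0).card := by rw [hk C0]; omega
    obtain ⟨q0, hq0⟩ := Finset.card_pos.1 hk0
    rw [← hr q0]
    exact Finset.card_pos.2 ⟨C0, mem_blocksThru.2 hq0⟩
  -- distance lemmas specialized to p
  have d1 : ∀ C : Bl, p ∈ pts C → (incGraph pts).dist (Sum.inl p) (Sum.inr C) = 1 :=
    fun C h => dist_inr_mem h
  have d3 : ∀ C : Bl, p ∉ pts C → (incGraph pts).dist (Sum.inl p) (Sum.inr C) = 3 := by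
    intro C hpC
    have hpos : 0 < ((pts C).filter (fun q => lamCount pts p q = lam)).card := by
      rw [hnonflag p C hpC]; omega
    obtain ⟨q, hq⟩ := Finset.card_pos.1 hpos
    rw [Finset.mem_filter] at hq
    exact dist_inr_not hpC ⟨q, hq.1, by rw [hq.2]; exact hlam1⟩
  have d2 : ∀ q : P, q ≠ p → 1 ≤ lamCount pts p q →
      (incGraph pts).dist (Sum.inl p) (Sum.inl q) = 2 :=
    fun q hne h => dist_inl_two hne h
  have d4 : ∀ q : P, q ≠ p → lamCount pts p q = 0 →
      (incGraph pts).dist (Sum.inl p) (Sum.inl q) = 4 := by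
    intro q hne h0
    have hpos : 0 < (blocksThru pts q).card := by rw [hr q]; omega
    obtain ⟨C, hC⟩ := Finset.card_pos.1 hpos
    have hqC := mem_blocksThru.1 hC
    have hpC : p ∉ pts C := fun hp => by
      have := lam_pos_of_common (pts := pts) hp hqC; omega
    exact dist_inl_four hne h0 hqC (d3 C hpC)
  -- classification of distances to points
  have hinl_even : ∀ q : P, (incGraph pts).dist (Sum.inl p) (Sum.inl q) = 0 ∨
      (incGraph pts).dist (Sum.inl p) (Sum.inl q) = 2 ∨
      (incGraph pts).dist (Sum.inl p) (Sum.inl q) = 4 := by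
    intro q
    by_cases hq : q = p
    · subst hq; left; exact SimpleGraph.dist_self
    · rcases hlam p q (Ne.symm hq) with h | h
      · right; left; exact d2 q hq (by rw [h]; exact hlam1)
      · right; right; exact d4 q hq h
  have hinl0 : ∀ q : P, (incGraph pts).dist (Sum.inl p) (Sum.inl q) = 0 → q = p := by
    intro q h
    by_contra hq
    rcases hlam p q (Ne.symm hq) with h' | h'
    · rw [d2 q hq (by rw [h']; exact hlam1)] at h; omega
    · rw [d4 q hq h'] at h; omega
  have hinl2 : ∀ q : P, (incGraph pts).dist (Sum.inl p) (Sum.inl q) = 2 →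
      q ≠ p ∧ lamCount pts p q = lam := by
    intro q h
    have hq : q ≠ p := by
      intro hq; subst hq; rw [SimpleGraph.dist_self] at h; omega
    refine ⟨hq, ?_⟩
    rcases hlam p q (Ne.symm hq) with h' | h'
    · exact h'
    · rw [d4 q hq h'] at h; omega
  have hinl4 : ∀ q : P, (incGraph pts).dist (Sum.inl p) (Sum.inl q) = 4 →
      q ≠ p ∧ lamCount pts p q = 0 := by
    intro q h
    have hq : q ≠ p := by
      intro hq; subst hq; rw [SimpleGraph.dist_self] at h; omega
    refine ⟨hq, ?_⟩
    rcases hlam p q (Ne.symm hq) with h' | h'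
    · rw [d2 q hq (by rw [h']; exact hlam1)] at h; omega
    · exact h'
  have hinr1 : ∀ C : Bl, (incGraph pts).dist (Sum.inl p) (Sum.inr C) = 1 → p ∈ pts C := by
    intro C h
    by_contra hpC
    rw [d3 C hpC] at h; omega
  have hinr3 : ∀ C : Bl, (incGraph pts).dist (Sum.inl p) (Sum.inr C) = 3 → p ∉ pts C := by
    intro C h hpC
    rw [d1 C hpC] at h; omega
  have hinr_odd : ∀ C : Bl, (incGraph pts).dist (Sum.inl p) (Sum.inr C) = 1 ∨
      (incGraph pts).dist (Sum.inl p) (Sum.inr C) = 3 := by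
    intro C
    by_cases hpC : p ∈ pts C
    · left; exact d1 C hpC
    · right; exact d3 C hpC
  intro z
  refine ⟨?_, ?_, ?_, ?_, ?_⟩
  -- i = 0
  · intro h0
    rcases z with q | C
    · have hq := hinl0 q h0
      subst hq
      have e : nbrAt (incGraph pts) (Sum.inl q) (Sum.inl q) 1
          = Sum.inr '' ↑(blocksThru pts q) := by
        ext w
        simp only [nbrAt, Set.mem_setOf_eq, Set.mem_image, Finset.mem_coe]
        constructor
        · rintro ⟨hadj, hd⟩
          obtain ⟨C, rfl, hC⟩ := adj_inl_elim hadj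
          exact ⟨C, mem_blocksThru.2 hC, rfl⟩
        · rintro ⟨C, hC, rfl⟩
          have hpC := mem_blocksThru.1 hC
          exact ⟨adj_inl_inr.2 hpC, d1 C hpC⟩
      rw [e, Set.ncard_image_of_injective _ Sum.inr_injective, Set.ncard_coe_finset, hr q]
    · exfalso; rcases hinr_odd C with h | h <;> omega
  -- i = 1
  · intro h1
    rcases z with q | C
    · exfalso; rcases hinl_even q with h | h | h <;> omega
    · have hpC : p ∈ pts C := hinr1 C h1
      constructor
      · have e : nbrAt (incGraph pts) (Sum.inl p) (Sum.inr C) 0 = {Sum.inl p} := by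
          ext w
          simp only [nbrAt, Set.mem_setOf_eq, Set.mem_singleton_iff]
          constructor
          · rintro ⟨hadj, hd⟩
            obtain ⟨q, rfl, hq⟩ := adj_inr_elim hadj
            rw [hinl0 q hd]
          · rintro rfl
            exact ⟨adj_inr_inl.2 hpC, SimpleGraph.dist_self⟩
        rw [e, Set.ncard_singleton]
      · have e : nbrAt (incGraph pts) (Sum.inl p) (Sum.inr C) 2
            = Sum.inl '' ↑((pts C).erase p) := by
          ext w
          simp only [nbrAt, Set.mem_setOf_eq, Set.mem_image, Finset.mem_coe,
            Finset.mem_erase]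
          constructor
          · rintro ⟨hadj, hd⟩
            obtain ⟨q, rfl, hq⟩ := adj_inr_elim hadj
            exact ⟨q, ⟨(hinl2 q hd).1, hq⟩, rfl⟩
          · rintro ⟨q, ⟨hne, hq⟩, rfl⟩
            exact ⟨adj_inr_inl.2 hq, d2 q hne (lam_pos_of_common hpC hq)⟩
        rw [e, Set.ncard_image_of_injective _ Sum.inl_injective, Set.ncard_coe_finset,
          Finset.card_erase_of_mem hpC, hk C]
  -- i = 2
  · intro h2
    rcases z with q | C
    · obtain ⟨hne, hlamq⟩ := hinl2 q h2
      constructor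
      · have e : nbrAt (incGraph pts) (Sum.inl p) (Sum.inl q) 1
            = Sum.inr '' ↑(blocksThru pts p ∩ blocksThru pts q) := by
          ext w
          simp only [nbrAt, Set.mem_setOf_eq, Set.mem_image, Finset.mem_coe,
            Finset.mem_inter]
          constructor
          · rintro ⟨hadj, hd⟩
            obtain ⟨C, rfl, hC⟩ := adj_inl_elim hadj
            exact ⟨C, ⟨mem_blocksThru.2 (hinr1 C hd), mem_blocksThru.2 hC⟩, rfl⟩
          · rintro ⟨C, ⟨hCp, hCq⟩, rfl⟩
            exact ⟨adj_inl_inr.2 (mem_blocksThru.1 hCq), d1 C (mem_blocksThru.1 hCp)⟩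
        rw [e, Set.ncard_image_of_injective _ Sum.inr_injective, Set.ncard_coe_finset]
        exact hlamq
      · have e : nbrAt (incGraph pts) (Sum.inl p) (Sum.inl q) 3
            = Sum.inr '' ↑(blocksThru pts q \ blocksThru pts p) := by
          ext w
          simp only [nbrAt, Set.mem_setOf_eq, Set.mem_image, Finset.mem_coe,
            Finset.mem_sdiff]
          constructor
          · rintro ⟨hadj, hd⟩
            obtain ⟨C, rfl, hC⟩ := adj_inl_elim hadj
            refine ⟨C, ⟨mem_blocksThru.2 hC, ?_⟩, rfl⟩
            intro hCp
            exact (hinr3 C hd) (mem_blocksThru.1 hCp)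
          · rintro ⟨C, ⟨hCq, hCp⟩, rfl⟩
            have hpC : p ∉ pts C := fun h => hCp (mem_blocksThru.2 h)
            exact ⟨adj_inl_inr.2 (mem_blocksThru.1 hCq), d3 C hpC⟩
        rw [e, Set.ncard_image_of_injective _ Sum.inr_injective, Set.ncard_coe_finset]
        have h1 : (blocksThru pts q \ blocksThru pts p).card
            + (blocksThru pts q ∩ blocksThru pts p).card = (blocksThru pts q).card :=
          Finset.card_sdiff_add_card_inter _ _
        rw [Finset.inter_comm] at h1
        have h2' : (blocksThru pts p ∩ blocksThru pts q).card = lam := hlamq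
        rw [hr q] at h1
        omega
    · exfalso; rcases hinr_odd C with h | h <;> omega
  -- i = 3
  · intro h3
    rcases z with q | C
    · exfalso; rcases hinl_even q with h | h | h <;> omega
    · have hpC : p ∉ pts C := hinr3 C h3
      constructor
      · have e : nbrAt (incGraph pts) (Sum.inl p) (Sum.inr C) 2
            = Sum.inl '' ↑((pts C).filter (fun q => lamCount pts p q = lam)) := by
          ext w
          simp only [nbrAt, Set.mem_setOf_eq, Set.mem_image, Finset.mem_coe,
            Finset.mem_filter]
          constructor
          · rintro ⟨hadj, hd⟩
            obtain ⟨q, rfl, hq⟩ := adj_inr_elim hadj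
            exact ⟨q, ⟨hq, (hinl2 q hd).2⟩, rfl⟩
          · rintro ⟨q, ⟨hq, hlq⟩, rfl⟩
            have hne : q ≠ p := fun h => hpC (h ▸ hq)
            exact ⟨adj_inr_inl.2 hq, d2 q hne (by rw [hlq]; exact hlam1)⟩
        rw [e, Set.ncard_image_of_injective _ Sum.inl_injective, Set.ncard_coe_finset,
          hnonflag p C hpC]
      · have e : nbrAt (incGraph pts) (Sum.inl p) (Sum.inr C) 4
            = Sum.inl '' ↑((pts C).filter (fun q => lamCount pts p q = 0)) := by
          ext w
          simp only [nbrAt, Set.mem_setOf_eq, Set.mem_image, Finset.mem_coe,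
            Finset.mem_filter]
          constructor
          · rintro ⟨hadj, hd⟩
            obtain ⟨q, rfl, hq⟩ := adj_inr_elim hadj
            exact ⟨q, ⟨hq, (hinl4 q hd).2⟩, rfl⟩
          · rintro ⟨q, ⟨hq, hlq⟩, rfl⟩
            have hne : q ≠ p := fun h => hpC (h ▸ hq)
            exact ⟨adj_inr_inl.2 hq, d4 q hne hlq⟩
        rw [e, Set.ncard_image_of_injective _ Sum.inl_injective, Set.ncard_coe_finset]
        have hfe : (pts C).filter (fun q => lamCount pts p q = 0)
            = (pts C).filter (fun q => ¬ lamCount pts p q = lam) := by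
          apply Finset.filter_congr
          intro q hq
          have hne : q ≠ p := fun h => hpC (h ▸ hq)
          rcases hlam p q (Ne.symm hne) with h' | h' <;> simp [h'] <;> omega
        rw [hfe]
        have hsum := Finset.card_filter_add_card_filter_not
          (s := pts C) (p := fun q => lamCount pts p q = lam)
        rw [hnonflag p C hpC, hk C] at hsum
        omega
  -- i = 4
  · intro h4
    rcases z with q | C
    · obtain ⟨hne, h0⟩ := hinl4 q h4
      constructor
      · have e : nbrAt (incGraph pts) (Sum.inl p) (Sum.inl q) 3
            = Sum.inr '' ↑(blocksThru pts q) := by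
          ext w
          simp only [nbrAt, Set.mem_setOf_eq, Set.mem_image, Finset.mem_coe]
          constructor
          · rintro ⟨hadj, hd⟩
            obtain ⟨C, rfl, hC⟩ := adj_inl_elim hadj
            exact ⟨C, mem_blocksThru.2 hC, rfl⟩
          · rintro ⟨C, hC, rfl⟩
            have hqC := mem_blocksThru.1 hC
            have hpC : p ∉ pts C := fun hp => by
              have := lam_pos_of_common (pts := pts) hp hqC; omega
            exact ⟨adj_inl_inr.2 hqC, d3 C hpC⟩
        rw [e, Set.ncard_image_of_injective _ Sum.inr_injective, Set.ncard_coe_finset, hr q]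
      · have e : nbrAt (incGraph pts) (Sum.inl p) (Sum.inl q) 5 = ∅ := by
          ext w
          simp only [nbrAt, Set.mem_setOf_eq, Set.mem_empty_iff_false, iff_false]
          rintro ⟨hadj, hd⟩
          obtain ⟨C, rfl, hC⟩ := adj_inl_elim hadj
          rcases hinr_odd C with h | h <;> omega
        rw [e, Set.ncard_empty]
    · exfalso; rcases hinr_odd C with h | h <;> omega
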